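/- arXiv:2205.05416 — 3 statements merged into one kernel-verified Lean document; each statement's English description precedes it below -/
import Mathlib

section
/- Let d ≥ 1 and M > 0. Let (V_i)_{i≥1} be an i.i.d. sequence of random variables with the Beta(1, M) distribution on [0,1], and define the stick-breaking weights ϖ_j = V_j ∏_{i=1}^{j−1} (1 − V_i) for j ≥ 1. Then the expectation E[ (∑_{j=1}^{d+1} ϖ_j²)^{−d/2} ] is finite. -/
/-!
The weights satisfy `∑_{j ≤ d} ϖ_j = 1 - ∏_{i ≤ d} (1 - V_i) ≥ max_i V_i ≥ (∏_i V_i)^{1/(d+1)}`,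
so Cauchy–Schwarz gives the pointwise bound
`(∑ ϖ_j²)^{-d/2} ≤ (d+1)^{d/2} (∑ ϖ_j)^{-d} ≤ (d+1)^{d/2} ∏_i V_i^{-d/(d+1)}`.
By independence the expectation of the right-hand side factorises, and each factor
`E[V^{-d/(d+1)}]` is the Beta integral `∫₀¹ M v^{-d/(d+1)} (1-v)^{M-1} dv`, whose exponents
both exceed `-1`.
-/

open MeasureTheory ProbabilityTheory Real Filter

/-- The Beta(1, M) distribution on [0,1]: density `M (1−v)^{M−1}` with respect to
Lebesgue measure restricted to `[0,1]`. -/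
noncomputable def betaOne (M : ℝ) : Measure ℝ :=
  (volume.restrict (Set.Icc (0 : ℝ) 1)).withDensity
    fun v => ENNReal.ofReal (M * (1 - v) ^ (M - 1))

/-- The stick-breaking weights `ϖ_j = V_j ∏_{i<j} (1 − V_i)` (0-indexed: `stick V j`
is the (j+1)-st weight). -/
noncomputable def stick {Ω : Type*} (V : ℕ → Ω → ℝ) (j : ℕ) (ω : Ω) : ℝ :=
  V j ω * ∏ i ∈ Finset.range j, (1 - V i ω)

open Finset

section StickBreaking

variable {Ω : Type*} (V : ℕ → Ω → ℝ) (ω : Ω)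

theorem sum_stick_eq_one_sub_prod (n : ℕ) :
    ∑ j ∈ range n, stick V j ω = 1 - ∏ i ∈ range n, (1 - V i ω) := by
  induction n with
  | zero => simp
  | succ n ih => rw [sum_range_succ, prod_range_succ, ih, stick]; ring

variable {V ω} {n : ℕ}

theorem le_sum_stick (hV : ∀ i ∈ range n, V i ω ∈ Set.Icc 0 1) {k : ℕ}
    (hk : k ∈ range n) : V k ω ≤ ∑ j ∈ range n, stick V j ω := by
  have hrest : ∏ i ∈ (range n).erase k, (1 - V i ω) ∈ Set.Icc 0 1 :=
    ⟨prod_nonneg fun i hi => by linarith [(hV i (mem_of_mem_erase hi)).2],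
      prod_le_one (fun i hi => by linarith [(hV i (mem_of_mem_erase hi)).2])
        fun i hi => by linarith [(hV i (mem_of_mem_erase hi)).1]⟩
  rw [sum_stick_eq_one_sub_prod, ← mul_prod_erase _ _ hk]
  nlinarith [mul_nonneg (sub_nonneg.mpr (hV k hk).2) (sub_nonneg.mpr hrest.2)]

theorem prod_le_sum_stick_pow (hV : ∀ i ∈ range n, V i ω ∈ Set.Icc 0 1) :
    ∏ i ∈ range n, V i ω ≤ (∑ j ∈ range n, stick V j ω) ^ n := by
  simpa using prod_le_prod (fun i hi => (hV i hi).1) fun i hi => le_sum_stick hV hi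

theorem sum_stick_sq_rpow_neg_le (hn : 0 < n) (hV : ∀ i ∈ range n, V i ω ∈ Set.Ioc 0 1)
    {p : ℝ} (hp : 0 ≤ p) :
    (∑ j ∈ range n, stick V j ω ^ 2) ^ (-p) ≤
      (n : ℝ) ^ p * ∏ i ∈ range n, V i ω ^ (-(2 * p / n)) := by
  have hV' : ∀ i ∈ range n, V i ω ∈ Set.Icc 0 1 := fun i hi =>
    Set.Ioc_subset_Icc_self (hV i hi)
  set S := ∑ j ∈ range n, stick V j ω
  set Q := ∑ j ∈ range n, stick V j ω ^ 2
  have hn' : (0 : ℝ) < n := Nat.cast_pos.mpr hn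
  have hprod_pos : 0 < ∏ i ∈ range n, V i ω := prod_pos fun i hi => (hV i hi).1
  have hS : 0 < S := (hV 0 (mem_range.mpr hn)).1.trans_le (le_sum_stick hV' (mem_range.mpr hn))
  have hCS : S ^ 2 ≤ n * Q := by simpa using sq_sum_le_card_mul_sum_sq (s := range n)
  have hQ : S ^ 2 / n ≤ Q := by rw [div_le_iff₀ hn']; linarith
  calc Q ^ (-p) ≤ (S ^ 2 / n) ^ (-p) :=
        rpow_le_rpow_of_nonpos (by positivity) hQ (neg_nonpos.mpr hp)
    _ = (n : ℝ) ^ p * (S ^ n) ^ (-(2 * p / n)) := by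
        rw [div_rpow (by positivity) hn'.le, rpow_neg hn'.le, ← rpow_natCast, ← rpow_natCast,
          ← rpow_mul hS.le, ← rpow_mul hS.le]
        field_simp
        push_cast
        ring_nf
    _ ≤ (n : ℝ) ^ p * (∏ i ∈ range n, V i ω) ^ (-(2 * p / n)) := by
        gcongr ?_ * ?_
        exact rpow_le_rpow_of_nonpos hprod_pos (prod_le_sum_stick_pow hV')
          (neg_nonpos.mpr (by positivity))
    _ = (n : ℝ) ^ p * ∏ i ∈ range n, V i ω ^ (-(2 * p / n)) := by
        rw [finsetProd_rpow _ _ fun i hi => (hV i hi).1.le]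

end StickBreaking

theorem integrableOn_rpow_mul_one_sub_rpow {r s : ℝ} (hr : -1 < r) (hs : -1 < s) :
    IntegrableOn (fun v : ℝ => v ^ r * (1 - v) ^ s) (Set.Icc 0 1) := by
  have hr_int : IntegrableOn (fun v : ℝ => v ^ r) (Set.Icc 0 (1 / 2)) := by
    rw [← intervalIntegrable_iff_integrableOn_Icc_of_le (by norm_num)]
    exact intervalIntegral.intervalIntegrable_rpow' hr
  have hs_int : IntegrableOn (fun v : ℝ => (1 - v) ^ s) (Set.Icc (1 / 2) 1) := by
    rw [← intervalIntegrable_iff_integrableOn_Icc_of_le (by norm_num)]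
    have h := (intervalIntegral.intervalIntegrable_rpow' hs (a := 0) (b := 1 / 2)).comp_sub_left 1
    rwa [sub_zero, sub_half, IntervalIntegrable.symm_iff] at h
  rw [← Set.Icc_union_Icc_eq_Icc (by norm_num : (0 : ℝ) ≤ 1 / 2) (by norm_num)]
  refine IntegrableOn.union (hr_int.mul_continuousOn ?_ isCompact_Icc)
    (hs_int.continuousOn_mul ?_ isCompact_Icc)
  · exact ContinuousOn.rpow_const (by fun_prop) fun v hv => Or.inl (by linarith [hv.2])
  · exact ContinuousOn.rpow_const (by fun_prop) fun v hv => Or.inl (by linarith [hv.1])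

theorem ae_betaOne_mem_Ioc (M : ℝ) : ∀ᵐ v ∂betaOne M, v ∈ Set.Ioc 0 1 := by
  refine (withDensity_absolutelyContinuous _ _).ae_le ?_
  rw [← Measure.restrict_congr_set Ioc_ae_eq_Icc]
  exact ae_restrict_mem measurableSet_Ioc

theorem lintegral_rpow_betaOne_lt_top {M : ℝ} (hM : 0 < M) {r : ℝ} (hr : -1 < r) :
    ∫⁻ v, ENNReal.ofReal (v ^ r) ∂betaOne M < ⊤ := by
  rw [betaOne, lintegral_withDensity_eq_lintegral_mul _ (by fun_prop) (by fun_prop)]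
  refine lt_of_eq_of_lt (setLIntegral_congr_fun measurableSet_Icc fun v hv => ?_)
    (((integrableOn_rpow_mul_one_sub_rpow hr (by linarith : -1 < M - 1)).const_mul M)
      |>.lintegral_lt_top)
  rw [Pi.mul_apply, ← ENNReal.ofReal_mul (by have := hv.2; positivity)]
  ring_nf

theorem lintegral_prod_comp_eq_pow_of_iIndepFun {Ω ι β : Type*} [MeasurableSpace Ω]
    [MeasurableSpace β] {μ : Measure Ω} {ν : Measure β} {V : ι → Ω → β}
    (hVmeas : ∀ i, Measurable (V i)) (hVindep : iIndepFun V μ) (hVlaw : ∀ i, μ.map (V i) = ν)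
    {g : β → ENNReal} (hg : Measurable g) (s : Finset ι) :
    ∫⁻ ω, ∏ i ∈ s, g (V i ω) ∂μ = (∫⁻ x, g x ∂ν) ^ s.card :=
  calc _ = ∏ i ∈ s, ∫⁻ ω, g (V i ω) ∂μ :=
        lintegral_prod_eq_prod_lintegral_of_indepFun s _ (hVindep.comp _ fun _ => hg)
          fun i => hg.comp (hVmeas i)
    _ = ∏ _i ∈ s, ∫⁻ x, g x ∂ν :=
        prod_congr rfl fun i _ => by rw [← hVlaw i, lintegral_map hg (hVmeas i)]
    _ = _ := prod_const _

theorem expectation_inv_sum_sq_stick_lt_top_general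
    {Ω : Type*} [MeasurableSpace Ω] (μ : Measure Ω)
    (d : ℕ) (M : ℝ) (hM : 0 < M)
    (V : ℕ → Ω → ℝ) (hVmeas : ∀ i, Measurable (V i))
    (hVindep : iIndepFun V μ)
    (hVlaw : ∀ i, Measure.map (V i) μ = betaOne M) :
    ∫⁻ ω, ENNReal.ofReal
        ((∑ j ∈ Finset.range (d + 1), (stick V j ω) ^ 2) ^ (-(d : ℝ) / 2)) ∂μ < ⊤ := by
  set a := 2 * ((d : ℝ) / 2) / ((d + 1 : ℕ) : ℝ)
  have ha : a < 1 := by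
    rw [div_lt_one (by positivity)]
    push_cast
    linarith
  have hV : ∀ᵐ ω ∂μ, ∀ i, V i ω ∈ Set.Ioc 0 1 := ae_all_iff.mpr fun i =>
    ae_of_ae_map (hVmeas i).aemeasurable (hVlaw i ▸ ae_betaOne_mem_Ioc M)
  have hbound : ∀ᵐ ω ∂μ, ENNReal.ofReal
      ((∑ j ∈ range (d + 1), stick V j ω ^ 2) ^ (-(d : ℝ) / 2)) ≤
        ENNReal.ofReal (((d + 1 : ℕ) : ℝ) ^ ((d : ℝ) / 2)) *
          ∏ i ∈ range (d + 1), ENNReal.ofReal (V i ω ^ (-a)) := by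
    filter_upwards [hV] with ω hω
    rw [← ENNReal.ofReal_prod_of_nonneg fun i _ => rpow_nonneg (hω i).1.le _,
      ← ENNReal.ofReal_mul (by positivity), neg_div]
    exact ENNReal.ofReal_le_ofReal
      (sum_stick_sq_rpow_neg_le d.succ_pos (fun i _ => hω i) (by positivity))
  calc _ ≤ _ := lintegral_mono_ae hbound
    _ = ENNReal.ofReal (((d + 1 : ℕ) : ℝ) ^ ((d : ℝ) / 2)) *
          (∫⁻ v, ENNReal.ofReal (v ^ (-a)) ∂betaOne M) ^ (d + 1) := by
      rw [lintegral_const_mul _ (by fun_prop), lintegral_prod_comp_eq_pow_of_iIndepFun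
        (g := fun v => ENNReal.ofReal (v ^ (-a))) hVmeas hVindep hVlaw (by fun_prop), card_range]
    _ < ⊤ := ENNReal.mul_lt_top ENNReal.ofReal_lt_top
      (ENNReal.pow_lt_top (lintegral_rpow_betaOne_lt_top hM (by linarith)))

/-- For `d ≥ 1`, `M > 0` and `(V_i)` i.i.d. Beta(1,M) with stick-breaking weights
`ϖ_j`, the expectation `E[(∑_{j=1}^{d+1} ϖ_j²)^{−d/2}]` is finite. -/
theorem expectation_inv_sum_sq_stick_lt_top
    {Ω : Type*} [MeasurableSpace Ω] (μ : Measure Ω) [IsProbabilityMeasure μ]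
    (d : ℕ) (hd : 1 ≤ d) (M : ℝ) (hM : 0 < M)
    (V : ℕ → Ω → ℝ) (hVmeas : ∀ i, Measurable (V i))
    (hVindep : iIndepFun V μ)
    (hVlaw : ∀ i, Measure.map (V i) μ = betaOne M) :
    ∫⁻ ω, ENNReal.ofReal
        ((∑ j ∈ Finset.range (d + 1), (stick V j ω) ^ 2) ^ (-(d : ℝ) / 2)) ∂μ < ⊤ :=
  expectation_inv_sum_sq_stick_lt_top_general μ d M hM V hVmeas hVindep hVlaw
end

section
/- For every integer d ≥ 1, the integral over the simplex Δ_{d+1} = {x ∈ ℝ^{d+1} : x_j ≥ 0 for all j and ∑_{j=1}^{d+1} x_j ≤ 1} of the function x ↦ (∑_{j=1}^{d+1} x_j²)^{−d/2} is finite, and is bounded above by 2π (π/2)^{d−1}. -/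
/-!
The simplex lies in `[0,1]² × [0,∞)^(d-1)`. For `a ≥ 1` and `s > 0`,
`∫₀^∞ (s + t²)^(-(a+1)/2) dt ≤ π/2 · s^(-a/2)`: bound the factor `(s + t²)^(-(a-1)/2)` by its
value at `t = 0` and use `∫₀^∞ (s + t²)⁻¹ dt = π / (2√s)`. Integrating out the `d - 1` unbounded
coordinates one at a time therefore leaves `(π/2)^(d-1)` times the integral over the unit square,
where `x² + y² ≥ xy` bounds it by `(∫₀¹ x^(-1/2) dx)² = 4 ≤ 2π`.
-/

open MeasureTheory Real Set

theorem lintegral_Ioc_zero_one_rpow {r : ℝ} (hr : -1 < r) :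
    ∫⁻ x in Ioc (0 : ℝ) 1, ENNReal.ofReal (x ^ r) = ENNReal.ofReal (1 / (r + 1)) := by
  have hint : IntegrableOn (fun x : ℝ => x ^ r) (Ioc 0 1) :=
    (intervalIntegrable_iff_integrableOn_Ioc_of_le zero_le_one).1
      (intervalIntegral.intervalIntegrable_rpow' hr)
  rw [← ofReal_integral_eq_lintegral_ofReal hint
    ((ae_restrict_mem measurableSet_Ioc).mono fun x hx => rpow_nonneg hx.1.le r),
    ← intervalIntegral.integral_of_le zero_le_one, integral_rpow (Or.inl hr)]
  norm_num [zero_rpow (by linarith : r + 1 ≠ 0)]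

theorem setLIntegral_unitSquare_rpow_sq_add_sq_le :
    ∫⁻ p in Icc (0 : ℝ) 1 ×ˢ Icc (0 : ℝ) 1,
      ENNReal.ofReal ((p.1 ^ 2 + p.2 ^ 2) ^ (-1 / 2 : ℝ)) ≤ 4 := by
  have hpt : ∀ p ∈ Ioc (0 : ℝ) 1 ×ˢ Ioc (0 : ℝ) 1,
      ENNReal.ofReal ((p.1 ^ 2 + p.2 ^ 2) ^ (-1 / 2 : ℝ)) ≤
        ENNReal.ofReal (p.1 ^ (-1 / 2 : ℝ)) * ENNReal.ofReal (p.2 ^ (-1 / 2 : ℝ)) := by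
    rintro ⟨x, y⟩ ⟨⟨hx, -⟩, ⟨hy, -⟩⟩
    rw [← ENNReal.ofReal_mul (by positivity), ← mul_rpow hx.le hy.le]
    exact ENNReal.ofReal_le_ofReal
      (rpow_le_rpow_of_nonpos (by positivity) (by nlinarith [sq_nonneg (x - y)]) (by norm_num))
  have hhalf : ∫⁻ x in Ioc (0 : ℝ) 1, ENNReal.ofReal (x ^ (-1 / 2 : ℝ)) = 2 := by
    rw [lintegral_Ioc_zero_one_rpow (by norm_num)]
    norm_num
  calc ∫⁻ p in Icc (0 : ℝ) 1 ×ˢ Icc (0 : ℝ) 1, ENNReal.ofReal ((p.1 ^ 2 + p.2 ^ 2) ^ (-1 / 2 : ℝ))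
      = ∫⁻ p in Ioc (0 : ℝ) 1 ×ˢ Ioc (0 : ℝ) 1,
          ENNReal.ofReal ((p.1 ^ 2 + p.2 ^ 2) ^ (-1 / 2 : ℝ)) := by
        simp only [Measure.volume_eq_prod, ← Measure.prod_restrict,
          Measure.restrict_congr_set (Ioc_ae_eq_Icc (μ := (volume : Measure ℝ)))]
    _ ≤ ∫⁻ p in Ioc (0 : ℝ) 1 ×ˢ Ioc (0 : ℝ) 1,
          ENNReal.ofReal (p.1 ^ (-1 / 2 : ℝ)) * ENNReal.ofReal (p.2 ^ (-1 / 2 : ℝ)) :=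
        setLIntegral_mono' (measurableSet_Ioc.prod measurableSet_Ioc) hpt
    _ = 4 := by
        rw [Measure.volume_eq_prod, ← Measure.prod_restrict,
          lintegral_prod_mul (f := fun x : ℝ => ENNReal.ofReal (x ^ (-1 / 2 : ℝ)))
            (g := fun x : ℝ => ENNReal.ofReal (x ^ (-1 / 2 : ℝ))) (by fun_prop) (by fun_prop),
          hhalf]
        norm_num

theorem lintegral_Ioi_inv_add_sq {s : ℝ} (hs : 0 < s) :
    ∫⁻ t in Ioi (0 : ℝ), ENNReal.ofReal ((s + t ^ 2)⁻¹) = ENNReal.ofReal (π / (2 * √s)) := by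
  have hs' : 0 < √s := sqrt_pos.2 hs
  have hrescale : (fun t : ℝ => (s + t ^ 2)⁻¹) = fun t => s⁻¹ * (1 + (t * (√s)⁻¹) ^ 2)⁻¹ := by
    ext t
    rw [mul_pow, inv_pow, sq_sqrt hs.le]
    field_simp
  have hint : Integrable fun t : ℝ => (s + t ^ 2)⁻¹ := by
    rw [hrescale]
    exact (integrable_inv_one_add_sq.comp_mul_right' (inv_ne_zero hs'.ne')).const_mul _
  rw [← ofReal_integral_eq_lintegral_ofReal hint.integrableOn
    (Filter.Eventually.of_forall fun t => by positivity), hrescale, integral_const_mul,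
    integral_comp_mul_right_Ioi (fun x => (1 + x ^ 2)⁻¹) 0 (inv_pos.2 hs'), zero_mul,
    integral_Ioi_inv_one_add_sq, arctan_zero, sub_zero, smul_eq_mul, inv_inv]
  congr 1
  field_simp
  rw [sq_sqrt hs.le]

theorem lintegral_Ioi_rpow_add_sq_le {a s : ℝ} (ha : 1 ≤ a) (hs : 0 < s) :
    ∫⁻ t in Ioi (0 : ℝ), ENNReal.ofReal ((s + t ^ 2) ^ (-(a + 1) / 2)) ≤
      ENNReal.ofReal (π / 2) * ENNReal.ofReal (s ^ (-a / 2)) := by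
  have hpt (t : ℝ) : (s + t ^ 2) ^ (-(a + 1) / 2) ≤ s ^ (-(a - 1) / 2) * (s + t ^ 2)⁻¹ := by
    have hst : 0 < s + t ^ 2 := by positivity
    rw [show -(a + 1) / 2 = -(a - 1) / 2 + -1 by ring, rpow_add hst, rpow_neg_one]
    exact mul_le_mul_of_nonneg_right
      (rpow_le_rpow_of_nonpos hs (le_add_of_nonneg_right (sq_nonneg t)) (by linarith))
      (inv_nonneg.2 hst.le)
  calc ∫⁻ t in Ioi (0 : ℝ), ENNReal.ofReal ((s + t ^ 2) ^ (-(a + 1) / 2))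
      ≤ ∫⁻ t in Ioi (0 : ℝ),
          ENNReal.ofReal (s ^ (-(a - 1) / 2)) * ENNReal.ofReal ((s + t ^ 2)⁻¹) :=
        lintegral_mono fun t => by
          rw [← ENNReal.ofReal_mul (by positivity)]
          exact ENNReal.ofReal_le_ofReal (hpt t)
    _ = ENNReal.ofReal (s ^ (-(a - 1) / 2)) * ENNReal.ofReal (π / (2 * √s)) := by
        rw [lintegral_const_mul _ (by fun_prop), lintegral_Ioi_inv_add_sq hs]
    _ = ENNReal.ofReal (π / 2) * ENNReal.ofReal (s ^ (-a / 2)) := by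
        rw [← ENNReal.ofReal_mul (by positivity), ← ENNReal.ofReal_mul (by positivity)]
        congr 1
        rw [show -(a - 1) / 2 = -a / 2 + 1 / 2 by ring, rpow_add hs, ← sqrt_eq_rpow]
        field_simp

theorem ae_sum_sq_pos {n : ℕ} [NeZero n] : ∀ᵐ y : Fin n → ℝ, 0 < ∑ j, y j ^ 2 := by
  have hne : ∀ᵐ y : Fin n → ℝ, y 0 ≠ 0 := by
    rw [ae_iff]
    simpa only [not_not, volume_pi] using Measure.pi_hyperplane _ 0 0
  filter_upwards [hne] with y hy
  have : 0 < y 0 ^ 2 := by positivity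
  exact this.trans_le (Finset.single_le_sum (fun j _ => sq_nonneg (y j)) (Finset.mem_univ 0))

theorem setLIntegral_snoc_rpow_sum_sq_le {n : ℕ} [NeZero n] (S : Set (Fin n → ℝ)) {a : ℝ}
    (ha : 1 ≤ a) :
    ∫⁻ x in {x : Fin (n + 1) → ℝ | Fin.init x ∈ S ∧ 0 ≤ x (Fin.last n)},
        ENNReal.ofReal ((∑ j, x j ^ 2) ^ (-(a + 1) / 2)) ≤
      ENNReal.ofReal (π / 2) * ∫⁻ y in S, ENNReal.ofReal ((∑ j, y j ^ 2) ^ (-a / 2)) := by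
  set e := MeasurableEquiv.piFinSuccAbove (fun _ => ℝ) (Fin.last n)
  set F : ℝ × (Fin n → ℝ) → ENNReal :=
    fun p => ENNReal.ofReal ((∑ j, p.2 j ^ 2 + p.1 ^ 2) ^ (-(a + 1) / 2))
  have hset : {x : Fin (n + 1) → ℝ | Fin.init x ∈ S ∧ 0 ≤ x (Fin.last n)} =
      e ⁻¹' (Ici 0 ×ˢ S) := by
    ext x
    simp [e, and_comm]
  have hF (x : Fin (n + 1) → ℝ) :
      ENNReal.ofReal ((∑ j, x j ^ 2) ^ (-(a + 1) / 2)) = F (e x) := by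
    simp [F, e, Fin.init, Fin.sum_univ_castSucc]
  simp_rw [hset, hF]
  rw [(volume_preserving_piFinSuccAbove (fun _ => ℝ) (Fin.last n)).setLIntegral_comp_preimage_emb
      e.measurableEmbedding, Measure.volume_eq_prod, ← Measure.prod_restrict,
    lintegral_prod_symm _ (by fun_prop), ← lintegral_const_mul' _ _ ENNReal.ofReal_ne_top]
  refine lintegral_mono_ae ((ae_restrict_of_ae ae_sum_sq_pos).mono fun y hy => ?_)
  rw [Measure.restrict_congr_set Ioi_ae_eq_Ici.symm]
  exact lintegral_Ioi_rpow_add_sq_le ha hy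

def squareOrthant (n : ℕ) : Set (Fin (n + 2) → ℝ) :=
  {x | (∀ j, 0 ≤ x j) ∧ x 0 ≤ 1 ∧ x 1 ≤ 1}

theorem squareOrthant_zero :
    squareOrthant 0 = MeasurableEquiv.finTwoArrow ⁻¹' (Icc 0 1 ×ˢ Icc 0 1) := by
  ext x
  simp [squareOrthant, Fin.forall_fin_two]

theorem squareOrthant_succ (n : ℕ) :
    squareOrthant (n + 1) =
      {x : Fin (n + 2 + 1) → ℝ | Fin.init x ∈ squareOrthant n ∧ 0 ≤ x (Fin.last (n + 2))} := by
  ext x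
  simp only [squareOrthant, Fin.forall_fin_succ' (n := n + 2), mem_ofPred_eq]
  tauto

theorem subset_squareOrthant (n : ℕ) :
    {x : Fin (n + 2) → ℝ | (∀ j, 0 ≤ x j) ∧ ∑ j, x j ≤ 1} ⊆ squareOrthant n := by
  rintro x ⟨hx, hsum⟩
  have hle (i : Fin (n + 2)) : x i ≤ 1 :=
    (Finset.single_le_sum (fun j _ => hx j) (Finset.mem_univ i)).trans hsum
  exact ⟨hx, hle 0, hle 1⟩

theorem setLIntegral_squareOrthant_le (n : ℕ) :
    ∫⁻ x in squareOrthant n, ENNReal.ofReal ((∑ j, x j ^ 2) ^ (-((n + 1 : ℕ) : ℝ) / 2)) ≤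
      ENNReal.ofReal (π / 2) ^ n * 4 := by
  induction n with
  | zero =>
    have h := (volume_preserving_finTwoArrow ℝ).setLIntegral_comp_preimage_emb
      MeasurableEquiv.finTwoArrow.measurableEmbedding
      (fun p => ENNReal.ofReal ((p.1 ^ 2 + p.2 ^ 2) ^ (-1 / 2 : ℝ))) (Icc 0 1 ×ˢ Icc 0 1)
    rw [squareOrthant_zero]
    convert h.trans_le setLIntegral_unitSquare_rpow_sq_add_sq_le using 4 with x
    · simp [Fin.sum_univ_two]
    · simp
  | succ n ih =>
    calc _ ≤ ENNReal.ofReal (π / 2) *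
          ∫⁻ y in squareOrthant n, ENNReal.ofReal ((∑ j, y j ^ 2) ^ (-((n + 1 : ℕ) : ℝ) / 2)) := by
          rw [squareOrthant_succ,
            show ((n + 1 + 1 : ℕ) : ℝ) = ((n + 1 : ℕ) : ℝ) + 1 by push_cast; ring]
          exact setLIntegral_snoc_rpow_sum_sq_le _ (Nat.one_le_cast.2 n.succ_pos)
      _ ≤ ENNReal.ofReal (π / 2) ^ (n + 1) * 4 := by
          rw [pow_succ', mul_assoc]
          gcongr

/-- For every integer `d ≥ 1`, the integral over the simplex
`Δ_{d+1} = {x ∈ ℝ^{d+1} : x_j ≥ 0, ∑ x_j ≤ 1}` of `x ↦ (∑_{j=1}^{d+1} x_j²)^{−d/2}`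
is finite and bounded above by `2π (π/2)^{d−1}`. -/
theorem lintegral_simplex_inv_norm_sq_le (d : ℕ) (hd : 1 ≤ d) :
    (∫⁻ x in {x : Fin (d + 1) → ℝ | (∀ j, 0 ≤ x j) ∧ ∑ j, x j ≤ 1},
        ENNReal.ofReal ((∑ j, (x j) ^ 2) ^ (-(d : ℝ) / 2)) ∂volume) ≤
          ENNReal.ofReal (2 * π * (π / 2) ^ (d - 1)) ∧
    (∫⁻ x in {x : Fin (d + 1) → ℝ | (∀ j, 0 ≤ x j) ∧ ∑ j, x j ≤ 1},
        ENNReal.ofReal ((∑ j, (x j) ^ 2) ^ (-(d : ℝ) / 2)) ∂volume) < ⊤ := by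
  obtain ⟨n, rfl⟩ : ∃ n, d = n + 1 := ⟨d - 1, by omega⟩
  have hle := calc
    _ ≤ ∫⁻ x in squareOrthant n, ENNReal.ofReal ((∑ j, x j ^ 2) ^ (-((n + 1 : ℕ) : ℝ) / 2)) :=
        lintegral_mono_set (subset_squareOrthant n)
    _ ≤ ENNReal.ofReal (π / 2) ^ n * 4 := setLIntegral_squareOrthant_le n
    _ ≤ ENNReal.ofReal (2 * π * (π / 2) ^ (n + 1 - 1)) := by
        rw [Nat.add_sub_cancel, ← ENNReal.ofReal_pow (by positivity), ← ENNReal.ofReal_ofNat,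
          ← ENNReal.ofReal_mul (by positivity)]
        refine ENNReal.ofReal_le_ofReal ?_
        nlinarith [pi_gt_three, pow_pos (div_pos pi_pos two_pos) n]
  exact ⟨hle, hle.trans_lt ENNReal.ofReal_lt_top⟩
end

section
/- (Unbiasedness of the sequential imputation weight.) Let the latent variables z = (z₁, …, z_n) take values in a finite set 𝒵^n and let p(z, y) be a joint probability mass (for fixed observed data y = (y₁, …, y_n)) with marginal p(y) = ∑_z p(z, y) > 0. Define the sequential imputation distribution π*(z) = p(z₁ | y₁) ∏_{i=2}^n p(z_i | y_{1:i}, z_{1:i−1}) and the weight w(z, y) = p(y₁) ∏_{i=2}^n p(y_i | y_{1:i−1}, z_{1:i−1}), where the conditionals are the usual ratios of marginals of p, assumed well-defined (all conditioning events have positive probability along any sequence with π*(z) > 0). Then for every z with π*(z) > 0, p(z | y)/π*(z) = w(z, y)/p(y); consequently ∑_z π*(z) w(z, y) = p(y), i.e., if z is sampled from π*, then w(z, y) is an unbiased estimator of the marginal likelihood p(y). -/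
open Finset

variable {n : ℕ} {Z Y : Type*} [Fintype Z] [DecidableEq Z] [Fintype Y] [DecidableEq Y]

/-- `seqMarginal q Y i j z` is the marginal `p(z_{1:i}, y_{1:j})` of the joint mass
function `q` at the fixed data `Y`: the total mass of all configurations agreeing with
`z` on the first `i` latent coordinates and with `Y` on the first `j` observations. -/
def seqMarginal (q : (Fin n → Z) → (Fin n → Y) → ℝ) (Y₀ : Fin n → Y)
    (i j : ℕ) (z : Fin n → Z) : ℝ :=
  ∑ z' : Fin n → Z, ∑ y' : Fin n → Y,
    if (∀ k : Fin n, (k : ℕ) < i → z' k = z k) ∧ (∀ k : Fin n, (k : ℕ) < j → y' k = Y₀ k)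
    then q z' y' else 0

/-- The sequential imputation distribution
`π*(z) = p(z₁ | y₁) ∏_{i=2}^n p(z_i | y_{1:i}, z_{1:i−1})`. -/
noncomputable def seqImputation (q : (Fin n → Z) → (Fin n → Y) → ℝ) (Y₀ : Fin n → Y)
    (z : Fin n → Z) : ℝ :=
  (seqMarginal q Y₀ 1 1 z / seqMarginal q Y₀ 0 1 z) *
    ∏ i ∈ Finset.Icc 2 n, seqMarginal q Y₀ i i z / seqMarginal q Y₀ (i - 1) i z

/-- The sequential imputation weight
`w(z, y) = p(y₁) ∏_{i=2}^n p(y_i | y_{1:i−1}, z_{1:i−1})`. -/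
noncomputable def seqWeight (q : (Fin n → Z) → (Fin n → Y) → ℝ) (Y₀ : Fin n → Y)
    (z : Fin n → Z) : ℝ :=
  seqMarginal q Y₀ 0 1 z *
    ∏ i ∈ Finset.Icc 2 n, seqMarginal q Y₀ (i - 1) i z / seqMarginal q Y₀ (i - 1) (i - 1) z

lemma le_seqMarginal' (q : (Fin n → Z) → (Fin n → Y) → ℝ) (hq0 : ∀ z y, 0 ≤ q z y)
    (Y₀ : Fin n → Y) (i j : ℕ) (z : Fin n → Z) : q z Y₀ ≤ seqMarginal q Y₀ i j z := by
  unfold seqMarginal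
  have hnn : ∀ (z' : Fin n → Z) (y' : Fin n → Y), (0:ℝ) ≤
      (if (∀ k : Fin n, (k : ℕ) < i → z' k = z k) ∧ (∀ k : Fin n, (k : ℕ) < j → y' k = Y₀ k)
      then q z' y' else 0) := by
    intro z' y'
    split
    · exact hq0 _ _
    · exact le_rfl
  have h1 : q z Y₀ ≤ ∑ y' : Fin n → Y,
      if (∀ k : Fin n, (k : ℕ) < i → z k = z k) ∧ (∀ k : Fin n, (k : ℕ) < j → y' k = Y₀ k)
      then q z y' else 0 := by
    have := Finset.single_le_sum (f := fun y' : Fin n → Y =>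
      if (∀ k : Fin n, (k : ℕ) < i → z k = z k) ∧ (∀ k : Fin n, (k : ℕ) < j → y' k = Y₀ k)
      then q z y' else 0) (fun y _ => hnn z y) (Finset.mem_univ Y₀)
    simpa using this
  refine le_trans h1 (Finset.single_le_sum (f := fun z' : Fin n → Z =>
      ∑ y' : Fin n → Y,
      if (∀ k : Fin n, (k : ℕ) < i → z' k = z k) ∧ (∀ k : Fin n, (k : ℕ) < j → y' k = Y₀ k)
      then q z' y' else 0) (fun z' _ => ?_) (Finset.mem_univ z))
  exact Finset.sum_nonneg fun y _ => hnn z' y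

lemma seqMarginal_n_n' (q : (Fin n → Z) → (Fin n → Y) → ℝ) (Y₀ : Fin n → Y)
    (z : Fin n → Z) : seqMarginal q Y₀ n n z = q z Y₀ := by
  unfold seqMarginal
  have h : ∀ (z' : Fin n → Z) (y' : Fin n → Y),
      ((∀ k : Fin n, (k : ℕ) < n → z' k = z k) ∧ (∀ k : Fin n, (k : ℕ) < n → y' k = Y₀ k))
      ↔ (z' = z ∧ y' = Y₀) := by
    intro z' y'
    constructor
    · rintro ⟨h1, h2⟩
      exact ⟨funext fun k => h1 k k.isLt, funext fun k => h2 k k.isLt⟩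
    · rintro ⟨rfl, rfl⟩; exact ⟨fun _ _ => rfl, fun _ _ => rfl⟩
  simp only [h, ite_and]
  simp [Finset.sum_ite_eq']

lemma seqMarginal_0_n' (q : (Fin n → Z) → (Fin n → Y) → ℝ) (Y₀ : Fin n → Y)
    (z : Fin n → Z) : seqMarginal q Y₀ 0 n z = ∑ z' : Fin n → Z, q z' Y₀ := by
  unfold seqMarginal
  refine Finset.sum_congr rfl fun z' _ => ?_
  have h : ∀ (y' : Fin n → Y),
      ((∀ k : Fin n, (k : ℕ) < 0 → z' k = z k) ∧ (∀ k : Fin n, (k : ℕ) < n → y' k = Y₀ k))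
      ↔ (y' = Y₀) := by
    intro y'
    constructor
    · rintro ⟨_, h2⟩; exact funext fun k => h2 k k.isLt
    · rintro rfl; exact ⟨fun k hk => absurd hk (Nat.not_lt_zero _), fun _ _ => rfl⟩
  simp only [h]
  simp [Finset.sum_ite_eq']

lemma seqKey (hn : 1 ≤ n) (q : (Fin n → Z) → (Fin n → Y) → ℝ) (hq0 : ∀ z y, 0 ≤ q z y)
    (Y₀ : Fin n → Y) (z : Fin n → Z) :
    seqImputation q Y₀ z * seqWeight q Y₀ z = q z Y₀ := by
  set A := seqMarginal q Y₀ 1 1 z * ∏ i ∈ Icc 2 n, seqMarginal q Y₀ i i z with hA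
  set B := seqMarginal q Y₀ 0 1 z * ∏ i ∈ Icc 2 n, seqMarginal q Y₀ (i-1) i z with hB
  set D := ∏ i ∈ Icc 2 n, seqMarginal q Y₀ (i-1) (i-1) z with hD
  have hπ : seqImputation q Y₀ z = A / B := by
    rw [seqImputation, hA, hB, Finset.prod_div_distrib, div_mul_div_comm]
  have hw : seqWeight q Y₀ z = B / D := by
    rw [seqWeight, hB, hD, Finset.prod_div_distrib, mul_div_assoc]
  have hDre : D = ∏ i ∈ Icc 1 (n-1), seqMarginal q Y₀ i i z := by
    rw [hD]
    refine Finset.prod_bij' (fun i _ => i - 1) (fun j _ => j + 1) ?_ ?_ ?_ ?_ ?_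
    · intro i hi; simp only [Finset.mem_Icc] at hi ⊢; omega
    · intro j hj; simp only [Finset.mem_Icc] at hj ⊢; omega
    · intro i hi; simp only [Finset.mem_Icc] at hi; omega
    · intro j hj; simp only [Finset.mem_Icc] at hj; omega
    · intro i hi; rfl
  have hAD : A = q z Y₀ * D := by
    have e1 : Icc 1 n = insert 1 (Icc 2 n) := by ext x; simp [Finset.mem_Icc]; omega
    have e2 : Icc 1 n = insert n (Icc 1 (n-1)) := by ext x; simp [Finset.mem_Icc]; omega
    have h1 : ∏ i ∈ Icc 1 n, seqMarginal q Y₀ i i z = A := by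
      rw [e1, Finset.prod_insert (by simp), hA]
    have h2 : ∏ i ∈ Icc 1 n, seqMarginal q Y₀ i i z = q z Y₀ * D := by
      rw [e2, Finset.prod_insert (by simp only [Finset.mem_Icc, not_and, not_le]; omega), seqMarginal_n_n', hDre]
    rw [← h1, h2]
  by_cases h : q z Y₀ = 0
  · rw [hπ, hw, hAD, h, zero_mul, zero_div, zero_mul]
  · have hq : 0 < q z Y₀ := lt_of_le_of_ne (hq0 z Y₀) (Ne.symm h)
    have hBpos : 0 < B := by
      rw [hB]
      exact mul_pos (lt_of_lt_of_le hq (le_seqMarginal' q hq0 Y₀ 0 1 z))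
        (Finset.prod_pos fun i _ => lt_of_lt_of_le hq (le_seqMarginal' q hq0 Y₀ _ _ z))
    have hDpos : 0 < D := by
      rw [hD]
      exact Finset.prod_pos fun i _ => lt_of_lt_of_le hq (le_seqMarginal' q hq0 Y₀ _ _ z)
    rw [hπ, hw, hAD]
    field_simp

/-- Kong–Liu–Wong sequential imputation identity: for a joint probability mass `q` over
latent variables and observations, with fixed data `Y₀` of positive marginal likelihood
`p(y) = seqMarginal q Y₀ 0 n`, one has `p(z | y)/π*(z) = w(z, y)/p(y)` for every `z` with
`π*(z) > 0` (all conditioning events along such `z` having positive probability);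
consequently `∑_z π*(z) w(z, y) = p(y)`, i.e. the weight `w` is an unbiased estimator of
the marginal likelihood under `π*`. -/
theorem sequential_imputation_unbiased (hn : 1 ≤ n)
    (q : (Fin n → Z) → (Fin n → Y) → ℝ) (hq0 : ∀ z y, 0 ≤ q z y)
    (hq1 : ∑ z : Fin n → Z, ∑ y : Fin n → Y, q z y = 1)
    (Y₀ : Fin n → Y) (hpos : ∀ z : Fin n → Z, 0 < seqMarginal q Y₀ 0 n z)
    (hcond : ∀ z : Fin n → Z, 0 < seqImputation q Y₀ z →
      ∀ i : ℕ, 1 ≤ i → i ≤ n →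
        0 < seqMarginal q Y₀ (i - 1) i z ∧ 0 < seqMarginal q Y₀ i i z ∧
          0 < seqMarginal q Y₀ (i - 1) (i - 1) z) :
    (∀ z : Fin n → Z, 0 < seqImputation q Y₀ z →
      (seqMarginal q Y₀ n n z / seqMarginal q Y₀ 0 n z) / seqImputation q Y₀ z =
        seqWeight q Y₀ z / seqMarginal q Y₀ 0 n z) ∧
    ∀ z₀ : Fin n → Z,
      ∑ z : Fin n → Z, seqImputation q Y₀ z * seqWeight q Y₀ z =
        seqMarginal q Y₀ 0 n z₀ := by
  constructor
  · intro z hz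
    have hkey := seqKey hn q hq0 Y₀ z
    have hMnn := seqMarginal_n_n' q Y₀ z
    rw [hMnn, ← hkey, mul_div_assoc, mul_div_cancel_left₀ _ (ne_of_gt hz)]
  · intro z₀
    rw [Finset.sum_congr rfl fun z _ => seqKey hn q hq0 Y₀ z, seqMarginal_0_n' q Y₀ z₀]
end
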